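/- arXiv:1201.2441 — 4 statements merged into one kernel-verified Lean document; each statement's English description precedes it below -/
import Mathlib

section
/- Let p be a valuated matroid on E and suppose u ∈ E is never the unique minimum of any circuit of p. Then u belongs to at least one p-minimal basis. (Proof: take a minimal basis B; if u ∉ B, let C = X(B,u) be the fundamental circuit; by hypothesis its minimum is attained at some v ≠ u, and the exchange B∪{u}∖{v} is a basis with p(B∪{u}∖{v}) ≤ p(B), hence also minimal and containing u.) -/
/-- A valuated matroid of rank `n` on a finite ground set `E`:
`p : Finset E → ℝ ∪ {∞}` taking a finite value only on `n`-element subsets (the bases),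
with at least one basis, and satisfying the valuated exchange axiom. -/
structure VMatroid (E : Type*) [DecidableEq E] [Fintype E] where
  n : ℕ
  p : Finset E → WithTop ℝ
  card_eq : ∀ B, p B ≠ ⊤ → B.card = n
  exists_basis : ∃ B, p B ≠ ⊤
  exchange : ∀ ⦃B B' : Finset E⦄, p B ≠ ⊤ → p B' ≠ ⊤ → ∀ u ∈ B \ B',
    ∃ v ∈ B' \ B,
      p ((insert v B).erase u) + p ((insert u B').erase v) ≤ p B + p B'

namespace VMatroid

variable {E : Type*} [DecidableEq E] [Fintype E] (M : VMatroid E)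

theorem exists_minimal_basis : ∃ B, M.p B ≠ ⊤ ∧ ∀ B', M.p B ≤ M.p B' := by
  obtain ⟨B, hB⟩ := Finite.exists_min M.p
  obtain ⟨B₀, hB₀⟩ := M.exists_basis
  exact ⟨B, ne_top_of_le_ne_top hB₀ (hB B₀), hB⟩

theorem minimal_basis_of_p_le {B B' : Finset E} (hB : M.p B ≠ ⊤) (hmin : ∀ C, M.p B ≤ M.p C)
    (hle : M.p B' ≤ M.p B) : M.p B' ≠ ⊤ ∧ ∀ C, M.p B' ≤ M.p C :=
  ⟨ne_top_of_le_ne_top hB hle, fun C => hle.trans (hmin C)⟩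

end VMatroid

/-- if `u` is never the unique minimum of any circuit of the valuated matroid
`p` (circuits `X(B,v)_w = p(B∪{v}∖{w}) − p(B)` for bases `B` and `v ∉ B`), then `u` belongs
to at least one `p`-minimal basis. -/
theorem stmt7 {E : Type*} [DecidableEq E] [Fintype E] (M : VMatroid E) (u : E)
    (h : ∀ (B : Finset E) (v : E), M.p B ≠ ⊤ → v ∉ B →
      M.p ((insert v B).erase u) ≠ ⊤ →
      ∃ w, w ≠ u ∧ M.p ((insert v B).erase w) ≤ M.p ((insert v B).erase u)) :
    ∃ B : Finset E, M.p B ≠ ⊤ ∧ u ∈ B ∧ ∀ B', M.p B ≤ M.p B' := by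
  obtain ⟨B, hB, hmin⟩ := M.exists_minimal_basis
  by_cases hu : u ∈ B
  · exact ⟨B, hB, hu, hmin⟩
  have hBu : (insert u B).erase u = B := Finset.erase_insert hu
  -- `u` is not the unique minimum of the fundamental circuit of `B` and `u`, so some `w ≠ u`
  -- can be exchanged for `u` without increasing `p`.
  obtain ⟨w, hwu, hle⟩ := h B u hB hu (by rwa [hBu])
  rw [hBu] at hle
  obtain ⟨hB', hmin'⟩ := M.minimal_basis_of_p_le hB hmin hle
  exact ⟨_, hB', Finset.mem_erase.mpr ⟨hwu.symm, Finset.mem_insert_self u B⟩, hmin'⟩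
end

section
/- Let p be a valuated matroid on E, x ∈ ℝ^E, and suppose u ∈ E is the unique x-minimum of some circuit of p. Define x' by changing only the u-coordinate of x to x'_u = max over circuits C containing u of min_{e ∈ C∖{u}} C^x_e, where each circuit C ∋ u is normalized so that C^x_u = x_u (i.e. C^x_e = p(B∪{u}∖{e}) − p(B) + x_e for a representing basis B ∌ u). Then: (a) x'_u > x_u; (b) u is not the unique x'-minimum of any circuit of p; and (c) for any ε > 0, setting x''_u = x'_u − ε, u is the unique x''-minimum of some circuit. In other words, x'_u is the smallest correction of the u-coordinate making the circuit condition at u hold. -/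
/-!
Normalise the circuit `X(B,u)` so that its `u`-coordinate is a free value `s`. Then `u` is its
unique minimum exactly when `s < m_B = min_{e ≠ u} X(B,u)^x_e`, and `m_B` does not depend on `s`.
So the circuit condition at `u` holds for `s` iff `s < m_B` for some `B`, and `t = max_B m_B` is
precisely the threshold.
-/
namespace LinearOrderedAddCommGroupWithTop

variable {α : Type*} [LinearOrderedAddCommGroupWithTop α] {a b c s : α}

lemma sub_add_add_cancel_of_ne_top (hb : b ≠ ⊤) : a - b + c + b = a + c := by
  rw [sub_eq_add_neg, add_right_comm, neg_add_cancel_right_of_ne_top hb]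

lemma lt_sub_add_iff_add_lt (hb : b ≠ ⊤) : s < a - b + c ↔ b + s < a + c := by
  rw [← add_lt_add_iff_left_of_ne_top hb, sub_add_add_cancel_of_ne_top hb, add_comm s]

lemma sub_add_le_iff_le_add (hb : b ≠ ⊤) : a - b + c ≤ s ↔ a + c ≤ b + s := by
  rw [← add_le_add_iff_left_of_ne_top hb, sub_add_add_cancel_of_ne_top hb, add_comm s]

end LinearOrderedAddCommGroupWithTop

namespace VMatroid

open LinearOrderedAddCommGroupWithTop

variable {E : Type*} [DecidableEq E] [Fintype E]

/-- `min_{e ≠ u} C^x_e` for the circuit `C = X(B,u)` normalised by `C^x_u = x_u`; coordinates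
outside the support of `C` are `⊤` and do not affect the minimum. -/
def circuitMin (M : VMatroid E) (x : E → ℝ) (u : E) (B : Finset E) : WithTop ℝ :=
  (Finset.univ.erase u).inf fun e => M.p ((insert u B).erase e) - M.p B + ((x e : ℝ) : WithTop ℝ)

variable {M : VMatroid E} {x : E → ℝ} {u : E} {B : Finset E}

theorem coe_lt_circuitMin_iff (hB : M.p B ≠ ⊤) {s : ℝ} :
    (s : WithTop ℝ) < M.circuitMin x u B ↔
      ∀ e, e ≠ u → M.p B + s < M.p ((insert u B).erase e) + x e := by
  simp only [circuitMin, Finset.lt_inf_iff (WithTop.coe_lt_top s), Finset.mem_erase,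
    Finset.mem_univ, and_true, lt_sub_add_iff_add_lt hB]

theorem circuitMin_le_coe_iff (hB : M.p B ≠ ⊤) {s : ℝ} :
    M.circuitMin x u B ≤ s ↔
      ∃ e, e ≠ u ∧ M.p ((insert u B).erase e) + x e ≤ M.p B + s := by
  simp only [circuitMin, Finset.inf_le_iff (WithTop.coe_lt_top s), Finset.mem_erase,
    Finset.mem_univ, and_true, sub_add_le_iff_le_add hB]

end VMatroid

open VMatroid in
/-- suppose `u` is the unique `x`-minimum of some circuit of the valuated
matroid `p` (circuits through `u` are represented as `X(B,u)` for bases `B ∌ u`, normalised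
so that the coordinate at `u` is `x_u`, i.e. `C^x_e = p(B∪{u}∖{e}) − p(B) + x_e`).
Let `t = max_{C ∋ u} min_{e ∈ C∖{u}} C^x_e`.  Then
(a) `x_u < t`; (b) after replacing `x_u` by `t`, `u` is no longer the unique minimum of any
circuit; (c) for every `ε > 0`, replacing `x_u` by `t − ε` leaves `u` the unique minimum of
some circuit.  Thus `t` is the smallest correction of the `u`-coordinate. -/
theorem stmt11 {E : Type*} [DecidableEq E] [Fintype E] (M : VMatroid E) (x : E → ℝ) (u : E)
    (hu : ∃ B : Finset E, M.p B ≠ ⊤ ∧ u ∉ B ∧ ∀ e, e ≠ u →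
      M.p B + ((x u : ℝ) : WithTop ℝ)
        < M.p ((insert u B).erase e) + ((x e : ℝ) : WithTop ℝ))
    (t : ℝ)
    (ht : IsGreatest {r : WithTop ℝ | ∃ B : Finset E, M.p B ≠ ⊤ ∧ u ∉ B ∧
        r = (Finset.univ.erase u).inf
          fun e => M.p ((insert u B).erase e) - M.p B + ((x e : ℝ) : WithTop ℝ)}
      ((t : ℝ) : WithTop ℝ)) :
    x u < t ∧
    (∀ B : Finset E, M.p B ≠ ⊤ → u ∉ B →
      ∃ e, e ≠ u ∧ M.p ((insert u B).erase e) + ((x e : ℝ) : WithTop ℝ)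
        ≤ M.p B + ((t : ℝ) : WithTop ℝ)) ∧
    ∀ ε : ℝ, 0 < ε → ∃ B : Finset E, M.p B ≠ ⊤ ∧ u ∉ B ∧ ∀ e, e ≠ u →
      M.p B + ((t - ε : ℝ) : WithTop ℝ)
        < M.p ((insert u B).erase e) + ((x e : ℝ) : WithTop ℝ) := by
  obtain ⟨⟨Bmax, hBmax, huBmax, ht_eq⟩, ht_max⟩ := ht
  replace ht_eq : M.circuitMin x u Bmax = t := ht_eq.symm
  have circuitMin_le_t {B : Finset E} (hB : M.p B ≠ ⊤) (huB : u ∉ B) :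
      M.circuitMin x u B ≤ t :=
    ht_max ⟨B, hB, huB, rfl⟩
  refine ⟨?_, fun B hB huB => (circuitMin_le_coe_iff hB).1 (circuitMin_le_t hB huB),
    fun ε hε => ⟨Bmax, hBmax, huBmax, (coe_lt_circuitMin_iff hBmax).1 ?_⟩⟩
  · obtain ⟨B₀, hB₀, huB₀, hcirc⟩ := hu
    exact WithTop.coe_lt_coe.1 <|
      ((coe_lt_circuitMin_iff hB₀).2 hcirc).trans_le (circuitMin_le_t hB₀ huB₀)
  · rw [ht_eq]
    exact WithTop.coe_lt_coe.2 (sub_lt_self t hε)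
end

section
/- Let K = ℂ((z)) with valuation v, V = K^n, and let M = (v_1,…,v_m) span V. For u ∈ ℤ^m let Λ_u = Σ_{i=1}^m 𝒪 z^{−u_i} v_i (a lattice, where 𝒪 = ℂ[[z]]). Let p(ω) = v(det(v_{ω_1},…,v_{ω_n})) be the associated valuated matroid on [m] and π_{L_p} the nearest-point projection onto the tropical linear space L_p. Then π_{L_p}(u) = (v_{Λ_u}(v_1), …, v_{Λ_u}(v_m)), where v_Λ(x) = max{k ∈ ℤ : x ∈ z^k Λ}. Consequently, for u, u' ∈ ℤ^m, Λ_u = Λ_{u'} if and only if π_{L_p}(u) = π_{L_p}(u'). -/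
/-!
Both halves of the projection formula are ultrametric arguments about the lattice
valuations `w_i = v_{Λ_u}(v_i)`.

`w ∈ L_p`: for `|τ| = n + 1` the Laplace expansion gives the relation
`∑_k ± p(τ ∖ k) v_k = 0`, and in any relation `∑ c_k v_k = 0` the minimum of `v(c_k) + w_k`
is attained twice: were it attained only at `k₀`, the relation scaled by a suitable power of `z`
would put `z^{-(w_{k₀}+1)} v_{k₀}` into `Λ_u`.

Minimality: let `w' ∈ L_p` with `w' ≥ u`, and choose a basis `σ` minimising
`p(σ) - ∑_{σ} w'`. The tropical Plücker relation on `σ ∪ {i}` lets one exchange `i` into `σ`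
without losing minimality. The Cramer functional `x ↦ det(v_σ with v_i replaced by x)` then has
order at least `p(σ) - w'_i` on every generator `z^{-u_l} v_l` of `Λ_u`, hence on `z^{-w_i} v_i`,
which gives `w_i ≤ w'_i`.

Since `u ≤ w`, also `Λ_u = Λ_w`, so the lattice and the projection determine each other.
-/

open scoped Classical

noncomputable section

/-- The variable `z` of `K = ℂ((z))`, viewed in the Laurent series field. -/
def zLS : LaurentSeries ℂ := HahnSeries.ofPowerSeries ℤ ℂ PowerSeries.X

/-- The valuated matroid of a spanning family `v_1,…,v_m` of `K^n`:
`p(ω) = v(det(v_{ω_1},…,v_{ω_n}))` (`⊤` if the family indexed by `ω` is not a basis). -/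
def matP (n m : ℕ) (v : Fin m → (Fin n → LaurentSeries ℂ)) (S : Finset (Fin m)) :
    WithTop ℝ :=
  if h : S.card = n then
    if hd : Matrix.det (Matrix.of fun i j => v (S.orderIsoOfFin h j) i) = 0 then ⊤
    else (((Matrix.det (Matrix.of fun i j => v (S.orderIsoOfFin h j) i)).order : ℝ) : WithTop ℝ)
  else ⊤

/-- Membership in the tropical linear space `L_p` of a rank-`n` valuation `p` on `[m]`. -/
def MemLp {m : ℕ} (n : ℕ) (p : Finset (Fin m) → WithTop ℝ) (w : Fin m → WithTop ℝ) : Prop :=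
  ∀ τ : Finset (Fin m), τ.card = n + 1 →
    ∃ i ∈ τ, ∃ j ∈ τ, i ≠ j ∧
      (∀ k ∈ τ, p (τ.erase i) + w i ≤ p (τ.erase k) + w k) ∧
      (∀ k ∈ τ, p (τ.erase j) + w j ≤ p (τ.erase k) + w k)

/-- The lattice `Λ_u = Σ_{i=1}^m 𝒪 z^{−u_i} v_i`. -/
def lat (n m : ℕ) (v : Fin m → (Fin n → LaurentSeries ℂ)) (u : Fin m → ℤ) :
    Submodule (PowerSeries ℂ) (Fin n → LaurentSeries ℂ) :=
  Submodule.span (PowerSeries ℂ) (Set.range fun i => (zLS ^ (-(u i))) • v i)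

open scoped LaurentSeries PowerSeries

namespace LaurentSeries

section Semiring

variable {R : Type*} [Semiring R]

theorem orderTop_ofPowerSeries_nonneg (b : R⟦X⟧) :
    0 ≤ (HahnSeries.ofPowerSeries ℤ R b).orderTop := by
  rw [HahnSeries.ofPowerSeries_apply, HahnSeries.orderTop_embDomain]
  cases (HahnSeries.toPowerSeries.symm b).orderTop with
  | top => exact le_top
  | coe k => exact WithTop.coe_le_coe.mpr (Int.natCast_nonneg k)

theorem exists_ofPowerSeries_eq {a : R⸨X⸩} (ha : 0 ≤ a.orderTop) :
    ∃ b : R⟦X⟧, HahnSeries.ofPowerSeries ℤ R b = a := by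
  rcases eq_or_ne a 0 with rfl | ha0
  · exact ⟨0, map_zero _⟩
  rw [← HahnSeries.order_eq_orderTop_of_ne_zero ha0, WithTop.coe_nonneg] at ha
  exact ⟨PowerSeries.X ^ a.order.toNat * a.powerSeriesPart,
    X_order_mul_powerSeriesPart (Int.toNat_of_nonneg ha)⟩

end Semiring

variable {F : Type*} [Field F] {M : Type*} [AddCommGroup M] [Module F⸨X⸩ M] [Module F⟦X⟧ M]
  [IsScalarTower F⟦X⟧ F⸨X⸩ M]

theorem smul_mem_of_orderTop_le {Λ : Submodule F⟦X⟧ M} {a b : F⸨X⸩} {x : M} (ha : a ≠ 0)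
    (hab : a.orderTop ≤ b.orderTop) (hx : a • x ∈ Λ) : b • x ∈ Λ := by
  have hsplit : b.orderTop = (b * a⁻¹).orderTop + a.orderTop := by
    rw [← HahnSeries.orderTop_mul, inv_mul_cancel_right₀ ha]
  have hq : 0 ≤ (b * a⁻¹).orderTop := by
    by_contra! hneg
    have := WithTop.add_lt_add_right (HahnSeries.orderTop_ne_top.mpr ha) hneg
    rw [zero_add, ← hsplit] at this
    exact this.not_ge hab
  obtain ⟨q, hq⟩ := exists_ofPowerSeries_eq hq
  have hbx : b • x = q • a • x := by
    rw [← algebraMap_smul F⸨X⸩ q, coe_algebraMap, hq, smul_smul, inv_mul_cancel_right₀ ha]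
  exact hbx ▸ Λ.smul_mem q hx

theorem le_orderTop_of_mem_span (φ : M →ₗ[F⸨X⸩] F⸨X⸩) {s : Set M} {c : WithTop ℤ}
    (hs : ∀ x ∈ s, c ≤ (φ x).orderTop) {x : M} (hx : x ∈ Submodule.span F⟦X⟧ s) :
    c ≤ (φ x).orderTop := by
  induction hx using Submodule.span_induction with
  | mem x hx => exact hs x hx
  | zero => simp
  | add x y _ _ hx hy =>
    rw [map_add]
    exact (le_min hx hy).trans HahnSeries.min_orderTop_le_orderTop_add
  | smul b x _ hx =>
    rw [← algebraMap_smul F⸨X⸩ b x, map_smul, smul_eq_mul, coe_algebraMap,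
      HahnSeries.orderTop_mul]
    simpa using add_le_add (orderTop_ofPowerSeries_nonneg b) hx

end LaurentSeries

theorem zLS_zpow (k : ℤ) : zLS ^ k = HahnSeries.single k 1 := by
  rw [zLS, HahnSeries.ofPowerSeries_X, ← RatFunc.single_zpow]

theorem zLS_zpow_ne_zero (k : ℤ) : zLS ^ k ≠ 0 := by
  rw [zLS_zpow]; exact HahnSeries.single_ne_zero one_ne_zero

theorem orderTop_zLS_zpow_mul (k : ℤ) {a : ℂ⸨X⸩} (ha : a ≠ 0) :
    (zLS ^ k * a).orderTop = (k + a.order : ℤ) := by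
  rw [HahnSeries.orderTop_mul, zLS_zpow, HahnSeries.orderTop_single one_ne_zero,
    ← HahnSeries.order_eq_orderTop_of_ne_zero ha, WithTop.coe_add]

theorem orderTop_zLS_zpow (k : ℤ) : (zLS ^ k).orderTop = k := by
  simpa using orderTop_zLS_zpow_mul k one_ne_zero

section Lattice

variable {M : Type*} [AddCommGroup M] [Module ℂ⸨X⸩ M] [Module ℂ⟦X⟧ M]
  [IsScalarTower ℂ⟦X⟧ ℂ⸨X⸩ M] {Λ : Submodule ℂ⟦X⟧ M}

theorem zLS_zpow_smul_mem_of_le {x : M} {k l : ℤ} (h : zLS ^ k • x ∈ Λ) (hkl : k ≤ l) :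
    zLS ^ l • x ∈ Λ :=
  LaurentSeries.smul_mem_of_orderTop_le (zLS_zpow_ne_zero k)
    (by simpa [orderTop_zLS_zpow] using hkl) h

/- If the minimum of `ord c_k + w_k` were attained only at `k₀`, with value `A`, then scaling the
relation by `z^{-(A+1)}` would put all other terms, hence also the `k₀`-th one, into `Λ`. -/
theorem exists_ne_order_add_le_of_sum_smul_eq_zero {ι : Type*} [Fintype ι] {x : ι → M}
    {c : ι → ℂ⸨X⸩} {w : ι → ℤ} (hrel : ∑ k, c k • x k = 0)
    (hw : ∀ k, IsGreatest {e : ℤ | zLS ^ (-e) • x k ∈ Λ} (w k)) {k₀ : ι} (hk₀ : c k₀ ≠ 0) :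
    ∃ k ≠ k₀, c k ≠ 0 ∧ (c k).order + w k ≤ (c k₀).order + w k₀ := by
  by_contra! hgt
  set A := (c k₀).order + w k₀
  have hterm : ∀ k ≠ k₀, (zLS ^ (-(A + 1)) * c k) • x k ∈ Λ := by
    intro k hk
    refine LaurentSeries.smul_mem_of_orderTop_le (zLS_zpow_ne_zero _) ?_ (hw k).1
    rcases eq_or_ne (c k) 0 with h0 | h0
    · simp [h0]
    rw [orderTop_zLS_zpow, orderTop_zLS_zpow_mul _ h0, WithTop.coe_le_coe]
    linarith [hgt k hk h0]
  have hk₀mem : (zLS ^ (-(A + 1)) * c k₀) • x k₀ ∈ Λ := by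
    have hsum : ∑ k, (zLS ^ (-(A + 1)) * c k) • x k = 0 := by
      simp_rw [mul_smul, ← Finset.smul_sum, hrel, smul_zero]
    rw [← Finset.add_sum_erase _ _ (Finset.mem_univ k₀), add_eq_zero_iff_eq_neg] at hsum
    rw [hsum]
    exact Λ.neg_mem (Λ.sum_mem fun k hk => hterm k (Finset.ne_of_mem_erase hk))
  have hnext : zLS ^ (-(w k₀ + 1)) • x k₀ ∈ Λ :=
    LaurentSeries.smul_mem_of_orderTop_le (mul_ne_zero (zLS_zpow_ne_zero _) hk₀)
      (by rw [orderTop_zLS_zpow_mul _ hk₀, orderTop_zLS_zpow, WithTop.coe_le_coe]; omega) hk₀mem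
  linarith [(hw k₀).2 hnext]

end Lattice

theorem zLS_zpow_smul_mem_lat {n m : ℕ} (v : Fin m → Fin n → ℂ⸨X⸩) (u : Fin m → ℤ)
    (i : Fin m) : zLS ^ (-(u i)) • v i ∈ lat n m v u :=
  Submodule.subset_span (Set.mem_range_self i)

theorem lat_eq_of_isGreatest {n m : ℕ} {v : Fin m → Fin n → ℂ⸨X⸩} {u w : Fin m → ℤ}
    (hw : ∀ i, IsGreatest {k : ℤ | zLS ^ (-k) • v i ∈ lat n m v u} (w i)) :
    lat n m v u = lat n m v w := by
  apply le_antisymm <;> rw [lat, Submodule.span_le] <;> rintro _ ⟨i, rfl⟩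
  · exact zLS_zpow_smul_mem_of_le (M := Fin n → ℂ⸨X⸩) (zLS_zpow_smul_mem_lat v w i)
      (neg_le_neg ((hw i).2 (zLS_zpow_smul_mem_lat v u i)))
  · exact (hw i).1

theorem Matrix.sum_neg_one_pow_mul_det_smul_eq_zero {R : Type*} [CommRing R] {n : ℕ}
    (x : Fin (n + 1) → Fin n → R) :
    ∑ k : Fin (n + 1), ((-1) ^ (k : ℕ) * (Matrix.of (x ∘ k.succAbove)).det) • x k = 0 := by
  funext c
  -- column `0` of `B` repeats column `c.succ`; expanding `det B = 0` along it gives coordinate `c`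
  let B : Matrix (Fin (n + 1)) (Fin (n + 1)) R := Matrix.of fun k => Fin.cons (x k c) (x k)
  have hB : B.det = 0 := Matrix.det_zero_of_column_eq (Fin.succ_ne_zero c).symm fun k => rfl
  rw [Matrix.det_succ_column_zero] at hB
  rw [Pi.zero_apply, ← hB, Finset.sum_apply]
  refine Finset.sum_congr rfl fun k _ => ?_
  have hminor : B.submatrix k.succAbove Fin.succ = Matrix.of (x ∘ k.succAbove) := by
    ext; simp [B]
  simp [hminor, B]
  ring

theorem Finset.image_univ_update {α β : Type*} [Fintype α] [DecidableEq α] [DecidableEq β]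
    {f : α → β} (hf : Function.Injective f) (t : α) (b : β) :
    Finset.univ.image (Function.update f t b) = insert b ((Finset.univ.image f).erase (f t)) := by
  ext l
  simp only [Finset.mem_image, Finset.mem_univ, true_and, Finset.mem_insert, Finset.mem_erase,
    Function.update_apply]
  constructor
  · rintro ⟨j, rfl⟩
    split_ifs with h
    · exact Or.inl rfl
    · exact Or.inr ⟨hf.ne h, j, rfl⟩
  · rintro (rfl | ⟨hne, j, rfl⟩)
    · exact ⟨t, if_pos rfl⟩
    · exact ⟨j, if_neg fun h : j = t => hne (h ▸ rfl)⟩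

def ordReal (a : ℂ⸨X⸩) : WithTop ℝ :=
  if a = 0 then ⊤ else ((a.order : ℝ) : WithTop ℝ)

theorem ordReal_of_ne_zero {a : ℂ⸨X⸩} (ha : a ≠ 0) : ordReal a = ((a.order : ℝ) : WithTop ℝ) :=
  if_neg ha

theorem ordReal_neg (a : ℂ⸨X⸩) : ordReal (-a) = ordReal a := by
  simp [ordReal, HahnSeries.order_neg]

theorem order_neg_one_pow_mul (k : ℕ) (a : ℂ⸨X⸩) : ((-1) ^ k * a).order = a.order := by
  rcases neg_one_pow_eq_or ℂ⸨X⸩ k with h | h <;> simp [h, HahnSeries.order_neg]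

theorem memLp_iff {n m : ℕ} {p : Finset (Fin m) → WithTop ℝ} {w : Fin m → WithTop ℝ} :
    MemLp n p w ↔ ∀ τ : Finset (Fin m), τ.card = n + 1 → ∀ i ∈ τ,
      ∃ k ∈ τ, k ≠ i ∧ p (τ.erase k) + w k ≤ p (τ.erase i) + w i := by
  constructor
  · intro hw τ hτ i hi
    obtain ⟨a, ha, b, hb, hab, hamin, hbmin⟩ := hw τ hτ
    by_cases hai : a = i
    · exact ⟨b, hb, hai ▸ hab.symm, hai ▸ hbmin a ha⟩
    · exact ⟨a, ha, hai, hamin i hi⟩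
  · intro hw τ hτ
    obtain ⟨i, hi, himin⟩ := τ.exists_min_image (fun k => p (τ.erase k) + w k)
      (Finset.card_pos.mp (by omega))
    obtain ⟨k, hk, hki, hkle⟩ := hw τ hτ i hi
    exact ⟨i, hi, k, hk, hki.symm, himin, fun l hl => hkle.trans (himin l hl)⟩

section Matroid

variable {n m : ℕ} (v : Fin m → Fin n → ℂ⸨X⸩)

theorem matP_eq_ordReal {S : Finset (Fin m)} (h : S.card = n) :
    matP n m v S = ordReal (Matrix.of (v ∘ S.orderEmbOfFin h)).det := by
  have hT : (Matrix.of fun i j => v (S.orderIsoOfFin h j) i) =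
      Matrix.transpose (Matrix.of (v ∘ S.orderEmbOfFin h)) := by
    ext
    simp [Finset.coe_orderIsoOfFin_apply]
  simp only [matP, dif_pos h, hT, Matrix.det_transpose, dite_eq_ite, ordReal]

theorem matP_image (f : Fin n → Fin m) :
    matP n m v (Finset.univ.image f) = ordReal (Matrix.of (v ∘ f)).det := by
  by_cases hf : Function.Injective f
  · have hcard : (Finset.univ.image f).card = n := by
      rw [Finset.card_image_of_injective _ hf, Finset.card_univ, Fintype.card_fin]
    set e := (Finset.univ.image f).orderEmbOfFin hcard
    have he : matP n m v (Finset.univ.image f) = ordReal (Matrix.of (v ∘ e)).det :=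
      matP_eq_ordReal v hcard
    have hrange : Set.range f = Set.range e := by simp [e]
    let π : Equiv.Perm (Fin n) := (Equiv.ofInjective f hf).trans
      ((Equiv.setCongr hrange).trans (Equiv.ofInjective e e.injective).symm)
    have hfπ : Matrix.of (v ∘ f) = (Matrix.of (v ∘ e)).submatrix π id := by
      ext j
      simp [π, Equiv.apply_ofInjective_symm]
    rw [he, hfπ, Matrix.det_permute, ← zsmul_eq_mul]
    rcases Int.units_eq_one_or (Equiv.Perm.sign π) with h | h <;> simp [h, ordReal_neg]
  · have hcard : (Finset.univ.image f).card ≠ n := by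
      intro h
      apply hf
      rw [← Set.injOn_univ, ← Finset.coe_univ, ← Finset.card_image_iff, h, Finset.card_univ,
        Fintype.card_fin]
    obtain ⟨a, b, hab, hne⟩ := Function.not_injective_iff.mp hf
    rw [matP, dif_neg hcard, ordReal, if_pos]
    exact Matrix.det_zero_of_row_eq hne (congrArg v hab)

variable {v}

theorem exists_det_ne_zero (hspan : Submodule.span ℂ⸨X⸩ (Set.range v) = ⊤) :
    ∃ f : Fin n → Fin m, (Matrix.of (v ∘ f)).det ≠ 0 := by
  obtain ⟨κ, a, ha, hspan', hli⟩ := exists_linearIndependent' ℂ⸨X⸩ v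
  have : Fintype κ := Fintype.ofInjective a ha
  have hκ : Fintype.card κ = n := by
    rw [linearIndependent_iff_card_eq_finrank_span.mp hli, Set.finrank, hspan', hspan,
      finrank_top, Module.finrank_fin_fun]
  let e : Fin n ≃ κ := (Fintype.equivFinOfCardEq hκ).symm
  refine ⟨a ∘ e, ((Matrix.isUnit_iff_isUnit_det _).mp ?_).ne_zero⟩
  exact Matrix.linearIndependent_rows_iff_isUnit.mp (hli.comp e e.injective)

theorem memLp_of_isGreatest {u w : Fin m → ℤ}
    (hw : ∀ i, IsGreatest {k : ℤ | zLS ^ (-k) • v i ∈ lat n m v u} (w i)) :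
    MemLp n (matP n m v) fun i => ((w i : ℝ) : WithTop ℝ) := by
  refine memLp_iff.mpr fun τ hτ i hi => ?_
  set g := τ.orderEmbOfFin hτ
  obtain ⟨k₀, rfl⟩ : ∃ k₀, g k₀ = i := by
    rw [← Set.mem_range, τ.range_orderEmbOfFin hτ]
    exact hi
  let d : Fin (n + 1) → ℂ⸨X⸩ := fun k => (Matrix.of (v ∘ g ∘ k.succAbove)).det
  have hmatP : ∀ k, matP n m v (τ.erase (g k)) = ordReal (d k) := fun k => by
    rw [← matP_image]
    congr 1
    rw [← Finset.image_image, Fin.image_succAbove_univ, Finset.compl_singleton,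
      Finset.image_erase g.injective, τ.image_orderEmbOfFin_univ hτ]
  rcases eq_or_ne (d k₀) 0 with h₀ | h₀
  · have hn : n ≠ 0 := by
      rintro rfl
      exact one_ne_zero (Matrix.det_isEmpty.symm.trans h₀)
    obtain ⟨k, hk, hki⟩ := Finset.exists_mem_ne (by omega : 1 < τ.card) (g k₀)
    exact ⟨k, hk, hki, by simp [hmatP, h₀, ordReal]⟩
  have hrel : ∑ k : Fin (n + 1), ((-1) ^ (k : ℕ) * d k) • v (g k) = 0 :=
    Matrix.sum_neg_one_pow_mul_det_smul_eq_zero (v ∘ g)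
  obtain ⟨k₁, hk₁, hc₁, hle⟩ := exists_ne_order_add_le_of_sum_smul_eq_zero
    (M := Fin n → ℂ⸨X⸩) hrel (fun k => hw (g k)) (by simpa using h₀)
  have h₁ : d k₁ ≠ 0 := by simpa using hc₁
  rw [order_neg_one_pow_mul, order_neg_one_pow_mul] at hle
  refine ⟨g k₁, τ.orderEmbOfFin_mem hτ k₁, g.injective.ne hk₁, ?_⟩
  rw [hmatP, hmatP, ordReal_of_ne_zero h₁, ordReal_of_ne_zero h₀, ← WithTop.coe_add,
    ← WithTop.coe_add, WithTop.coe_le_coe]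
  exact_mod_cast hle

end Matroid

section MinBasis

variable {n m : ℕ} (v : Fin m → Fin n → ℂ⸨X⸩) (ww : Fin m → ℝ)

def basisWeight (f : Fin n → Fin m) : ℝ :=
  (Matrix.of (v ∘ f)).det.order - ∑ j, ww (f j)

def IsMinBasis (f : Fin n → Fin m) : Prop :=
  (Matrix.of (v ∘ f)).det ≠ 0 ∧
    ∀ g : Fin n → Fin m, (Matrix.of (v ∘ g)).det ≠ 0 → basisWeight v ww f ≤ basisWeight v ww g

variable {v ww}

theorem exists_isMinBasis (hspan : Submodule.span ℂ⸨X⸩ (Set.range v) = ⊤) :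
    ∃ f, IsMinBasis v ww f := by
  obtain ⟨f₀, hf₀⟩ := exists_det_ne_zero hspan
  obtain ⟨f, hf, hmin⟩ := (Finset.univ.filter fun f : Fin n → Fin m =>
    (Matrix.of (v ∘ f)).det ≠ 0).exists_min_image (basisWeight v ww) ⟨f₀, by simpa using hf₀⟩
  exact ⟨f, (Finset.mem_filter.mp hf).2, fun g hg => hmin g (by simpa using hg)⟩

theorem basisWeight_update_sub (f : Fin n → Fin m) (t : Fin n) (l : Fin m) :
    basisWeight v ww (Function.update f t l) - basisWeight v ww f =
      ((Matrix.of (v ∘ Function.update f t l)).det.order + ww (f t)) -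
        ((Matrix.of (v ∘ f)).det.order + ww l) := by
  have hsum : ∑ j, ww (Function.update f t l j) = ∑ j, ww (f j) - ww (f t) + ww l := by
    simp_rw [Function.apply_update (fun _ => ww)]
    rw [Finset.sum_update_of_mem (Finset.mem_univ t), Finset.sdiff_singleton_eq_erase,
      Finset.sum_erase_eq_sub (Finset.mem_univ t)]
    ring
  simp only [basisWeight, hsum]
  ring

theorem IsMinBasis.injective {f : Fin n → Fin m} (hf : IsMinBasis v ww f) :
    Function.Injective f := fun a b hab => by
  by_contra hne
  exact hf.1 (Matrix.det_zero_of_row_eq hne (congrArg v hab))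

theorem IsMinBasis.exists_update {f : Fin n → Fin m} (hf : IsMinBasis v ww f)
    {w' : Fin m → WithTop ℝ} (hw' : MemLp n (matP n m v) w')
    (hww : ∀ l, w' l ≠ ⊤ → w' l = ww l) {i : Fin m} (hi : i ∉ Set.range f) (hwi : w' i ≠ ⊤) :
    ∃ t, IsMinBasis v ww (Function.update f t i) := by
  set σ := Finset.univ.image f
  have hiσ : i ∉ σ := by simpa [σ] using hi
  have hτ : (insert i σ).card = n + 1 := by
    rw [Finset.card_insert_of_notMem hiσ, Finset.card_image_of_injective _ hf.injective,
      Finset.card_univ, Fintype.card_fin]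
  obtain ⟨k, hk, hki, hle⟩ := memLp_iff.mp hw' _ hτ i (Finset.mem_insert_self i σ)
  obtain ⟨t, -, rfl⟩ := Finset.mem_image.mp (Finset.mem_of_mem_insert_of_ne hk hki)
  rw [Finset.erase_insert hiσ, Finset.erase_insert_of_ne (Ne.symm hki),
    ← Finset.image_univ_update hf.injective, matP_image, matP_image, ordReal_of_ne_zero hf.1,
    hww i hwi, ← WithTop.coe_add] at hle
  have hdet : (Matrix.of (v ∘ Function.update f t i)).det ≠ 0 := by
    rintro h
    simp [h, ordReal] at hle
  have hwt : w' (f t) ≠ ⊤ := by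
    rintro h
    simp [h] at hle
  rw [ordReal_of_ne_zero hdet, hww _ hwt, ← WithTop.coe_add, WithTop.coe_le_coe] at hle
  refine ⟨t, hdet, fun g hg => le_trans ?_ (hf.2 g hg)⟩
  linarith [basisWeight_update_sub (v := v) (ww := ww) f t i]

theorem IsMinBasis.le_of_smul_mem_lat {f : Fin n → Fin m} (hf : IsMinBasis v ww f)
    {u : Fin m → ℤ} (hu : ∀ l, (u l : ℝ) ≤ ww l) {t : Fin n} {k : ℤ}
    (hk : zLS ^ (-k) • v (f t) ∈ lat n m v u) : (k : ℝ) ≤ ww (f t) := by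
  -- the Cramer functional: `φ x` is the determinant of the rows `v (f j)` with row `t` set to `x`
  let φ := Matrix.detRowAlternating.toMultilinearMap.toLinearMap (v ∘ f) t
  have hφ : ∀ l, φ (v l) = (Matrix.of (v ∘ Function.update f t l)).det := fun l => by
    simp [φ, MultilinearMap.toLinearMap_apply, Function.comp_update]
    rfl
  obtain ⟨q, hq⟩ : ∃ q : ℤ, (Matrix.of (v ∘ f)).det.order = q := ⟨_, rfl⟩
  have hgen : ∀ x ∈ Set.range fun l => zLS ^ (-(u l)) • v l,
      ((⌈q - ww (f t)⌉ : ℤ) : WithTop ℤ) ≤ (φ x).orderTop := by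
    rintro _ ⟨l, rfl⟩
    rw [map_smul, smul_eq_mul, hφ]
    rcases eq_or_ne (Matrix.of (v ∘ Function.update f t l)).det 0 with h0 | h0
    · simp [h0]
    rw [orderTop_zLS_zpow_mul _ h0, WithTop.coe_le_coe, Int.ceil_le]
    have := basisWeight_update_sub (v := v) (ww := ww) f t l
    rw [hq] at this
    push_cast
    linarith [hu l, hf.2 _ h0]
  have hbound := LaurentSeries.le_orderTop_of_mem_span φ hgen hk
  rw [map_smul, smul_eq_mul, hφ, Function.update_eq_self, orderTop_zLS_zpow_mul _ hf.1, hq,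
    WithTop.coe_le_coe] at hbound
  have hceil : (⌈q - ww (f t)⌉ : ℝ) ≤ -k + q := by exact_mod_cast hbound
  linarith [Int.le_ceil (q - ww (f t))]

theorem le_of_memLp_of_smul_mem_lat (hspan : Submodule.span ℂ⸨X⸩ (Set.range v) = ⊤)
    {u : Fin m → ℤ} {w' : Fin m → WithTop ℝ} (hw' : MemLp n (matP n m v) w')
    (hu : ∀ l, ((u l : ℝ) : WithTop ℝ) ≤ w' l) {i : Fin m} {k : ℤ}
    (hk : zLS ^ (-k) • v i ∈ lat n m v u) : ((k : ℝ) : WithTop ℝ) ≤ w' i := by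
  rcases eq_or_ne (w' i) ⊤ with h | hwi
  · simp [h]
  -- a real-valued stand-in for `w'`, equal to it where it is finite and still above `u`
  let ww l := (w' l).untopD (u l : ℝ)
  have hww : ∀ l, w' l ≠ ⊤ → w' l = ww l := fun l hl => by
    obtain ⟨s, hs⟩ := WithTop.ne_top_iff_exists.mp hl
    simp [ww, ← hs]
  have hu' : ∀ l, (u l : ℝ) ≤ ww l := fun l => by
    rcases eq_or_ne (w' l) ⊤ with h | h
    · simp [ww, h]
    · exact WithTop.coe_le_coe.mp (hww l h ▸ hu l)
  obtain ⟨f, hf, t, rfl⟩ : ∃ f, IsMinBasis v ww f ∧ i ∈ Set.range f := by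
    obtain ⟨f, hf⟩ := exists_isMinBasis (ww := ww) hspan
    by_cases hi : i ∈ Set.range f
    · exact ⟨f, hf, hi⟩
    obtain ⟨t, ht⟩ := hf.exists_update hw' hww hi hwi
    exact ⟨_, ht, t, Function.update_self t i f⟩
  rw [hww _ hwi, WithTop.coe_le_coe]
  exact hf.le_of_smul_mem_lat hu' hk

end MinBasis

/-- Keel–Tevelev, as in the paper: let `v_1,…,v_m` span `K^n` and
`Λ_u = Σ 𝒪 z^{−u_i}v_i`.  If `w_i = v_{Λ_u}(v_i) = max{k : v_i ∈ z^kΛ_u}`, then `w` is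
exactly the nearest-point tropical projection `π_{L_p}(u) = min{w ∈ L_p : w ≥ u}` of `u`
onto the tropical linear space of `p(ω) = v(det M_ω)`; consequently `Λ_u = Λ_{u'}` iff
`π_{L_p}(u) = π_{L_p}(u')`. -/
theorem stmt12 (n m : ℕ) (v : Fin m → (Fin n → LaurentSeries ℂ))
    (hspan : Submodule.span (LaurentSeries ℂ) (Set.range v) = ⊤)
    (u : Fin m → ℤ) (w : Fin m → ℤ)
    (hw : ∀ i, IsGreatest {k : ℤ | (zLS ^ (-k)) • v i ∈ lat n m v u} (w i)) :
    (MemLp n (matP n m v) fun i => ((w i : ℝ) : WithTop ℝ)) ∧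
    (∀ i, (((u i : ℝ)) : WithTop ℝ) ≤ ((w i : ℝ) : WithTop ℝ)) ∧
    (∀ w' : Fin m → WithTop ℝ, MemLp n (matP n m v) w' →
      (∀ i, (((u i : ℝ)) : WithTop ℝ) ≤ w' i) → ∀ i, ((w i : ℝ) : WithTop ℝ) ≤ w' i) ∧
    (∀ (u' w' : Fin m → ℤ),
      (∀ i, IsGreatest {k : ℤ | (zLS ^ (-k)) • v i ∈ lat n m v u'} (w' i)) →
      (lat n m v u = lat n m v u' ↔ w = w')) := by
  refine ⟨memLp_of_isGreatest hw, fun i => ?_, fun w' hw' hu i => ?_, fun u' w' hw' => ?_⟩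
  · exact_mod_cast (hw i).2 (zLS_zpow_smul_mem_lat v u i)
  · exact le_of_memLp_of_smul_mem_lat hspan hw' hu (hw i).1
  · constructor
    · intro h
      funext i
      exact (hw i).unique (h ▸ hw' i)
    · intro h
      rw [lat_eq_of_isGreatest hw, lat_eq_of_isGreatest hw', h]

end
end

section
/- Let V be a finite-dimensional K-vector space (K = ℂ((z))), ∇ a connection, D = ∇ contracted with z d/dz, and ∇_k contracted with z^{k+1} d/dz. Let Λ be a lattice with basis (e_1,…,e_n). For k ≥ 0 and ℓ ≥ 0 define F^ℓ_k(Λ) = Λ + ∇_kΛ + ⋯ + ∇_k^ℓ Λ. Then F^ℓ_k(Λ) equals the 𝒪-module generated by the vectors z^{−(−jk)}-twisted iterates { z^{jk} D^j e_i : 1 ≤ i ≤ n, 0 ≤ j ≤ ℓ }; that is, F^ℓ_k(Λ) = Σ_{i=1}^n Σ_{j=0}^ℓ 𝒪 · z^{jk} D^j(e_i). -/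
/-!
Let `T = t • D` with `t = z^k`, and let `δ` be the restriction of `θ` to `𝒪`. Leibniz gives
`T (a • x) = δ a • t • x + a • T x`, so `T` maps `span S` into any `𝒪`-module containing `t • S`
and `T S`. Since `t^m ∣ δ (t^m)` (indeed `θ z^m = m z^m`),
`T (t^m • D^m v) ≡ t^(m+1) • D^(m+1) v` modulo `𝒪 • t^(m+1) • D^m v`.
Hence `T` raises the filtration `N_j = Σ_{m ≤ j} 𝒪 • t^m • D^m e_i` by one, so `F^ℓ ⊆ N_ℓ`;
read backwards, the same congruence puts `t^j • D^j v` in `Σ_{m ≤ j} 𝒪 • T^m v`.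
-/

open Submodule

def derivSpan {A V ι : Type*} [CommRing A] [AddCommGroup V] [Module A V]
    (D : V →+ V) (t : A) (e : ι → V) (j : ℕ) : Submodule A V :=
  span A {w : V | ∃ i : ι, ∃ m ≤ j, w = t ^ m • D^[m] (e i)}

theorem derivSpan_mono {A V ι : Type*} [CommRing A] [AddCommGroup V] [Module A V]
    (D : V →+ V) (t : A) (e : ι → V) : Monotone (derivSpan D t e) :=
  fun _ _ hjj' => span_mono fun _ ⟨i, m, hm, hw⟩ => ⟨i, m, hm.trans hjj', hw⟩

namespace Leibniz

variable {A V ι : Type*} [CommRing A] [AddCommGroup V] [Module A V]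
  {δ : A → A} {D : V →+ V} (hD : ∀ (a : A) (v : V), D (a • v) = δ a • v + a • D v)
  {t : A}
include hD

theorem smul_apply_mem_of_mem_span {S : Set V} {M : Submodule A V} (hS : S ⊆ M)
    (hT : ∀ s ∈ S, t • D s ∈ M) {y : V} (hy : y ∈ span A S) : t • D y ∈ M := by
  induction hy using Submodule.span_induction with
  | mem x hx => exact hT x hx
  | zero => simp
  | add x y _ _ hx hy => simpa only [map_add, smul_add] using M.add_mem hx hy
  | smul a x hx ih =>
    have hTx : t • x ∈ M := M.smul_mem t (span_le.mpr hS hx)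
    have h : t • D (a • x) = δ a • t • x + a • t • D x := by
      rw [hD, smul_add, smul_comm t (δ a), smul_comm t a]
    rw [h]
    exact M.add_mem (M.smul_mem _ hTx) (M.smul_mem _ ih)

theorem smul_apply_pow_smul {m : ℕ} {c : A} (hc : δ (t ^ m) = t ^ m * c) (w : V) :
    t • D (t ^ m • w) = t ^ (m + 1) • D w + c • t ^ (m + 1) • w := by
  rw [hD, hc]
  module

variable (ht : ∀ m : ℕ, t ^ m ∣ δ (t ^ m))
include ht

theorem smul_apply_mem_derivSpan_succ (e : ι → V) {j : ℕ} {y : V}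
    (hy : y ∈ derivSpan D t e j) : t • D y ∈ derivSpan D t e (j + 1) := by
  refine smul_apply_mem_of_mem_span hD
    (subset_span.trans (derivSpan_mono D t e (Nat.le_succ j))) ?_ hy
  rintro _ ⟨i, m, hm, rfl⟩
  obtain ⟨c, hc⟩ := ht m
  rw [smul_apply_pow_smul hD hc, ← Function.iterate_succ_apply' D]
  refine add_mem (subset_span ⟨i, m + 1, by omega, rfl⟩) (smul_mem _ c ?_)
  rw [pow_succ', mul_smul]
  exact smul_mem _ t (subset_span ⟨i, m, by omega, rfl⟩)

theorem iterate_mem_derivSpan (e : ι → V) {y : V} (hy : y ∈ span A (Set.range e)) (j : ℕ) :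
    (fun y' => t • D y')^[j] y ∈ derivSpan D t e j := by
  induction j with
  | zero =>
    refine span_le.mpr ?_ hy
    rintro _ ⟨i, rfl⟩
    exact subset_span ⟨i, 0, le_rfl, by simp⟩
  | succ j ih =>
    rw [Function.iterate_succ_apply']
    exact smul_apply_mem_derivSpan_succ hD ht e ih

theorem pow_smul_iterate_mem_span_iterate (v : V) (j : ℕ) :
    t ^ j • D^[j] v ∈ span A {w : V | ∃ m ≤ j, w = (fun y' => t • D y')^[m] v} := by
  induction j with
  | zero => exact subset_span ⟨0, le_rfl, by simp⟩
  | succ j ih =>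
    obtain ⟨c, hc⟩ := ht j
    have hstep := smul_apply_pow_smul hD hc (D^[j] v)
    rw [← Function.iterate_succ_apply' D] at hstep
    rw [eq_sub_of_add_eq hstep.symm]
    have hmono : span A {w : V | ∃ m ≤ j, w = (fun y' => t • D y')^[m] v}
        ≤ span A {w : V | ∃ m ≤ j + 1, w = (fun y' => t • D y')^[m] v} :=
      span_mono fun _ ⟨m, hm, hw⟩ => ⟨m, by omega, hw⟩
    refine sub_mem (smul_apply_mem_of_mem_span hD (subset_span.trans hmono) ?_ ih)
      (smul_mem _ c ?_)
    · rintro _ ⟨m, hm, rfl⟩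
      rw [← Function.iterate_succ_apply' (fun y' => t • D y')]
      exact subset_span ⟨m + 1, by omega, rfl⟩
    · rw [pow_succ', mul_smul]
      exact smul_mem _ t (hmono ih)

theorem span_iterate_eq_derivSpan (e : ι → V) (ℓ : ℕ) :
    span A {w : V | ∃ j ≤ ℓ, ∃ y ∈ span A (Set.range e), w = (fun y' => t • D y')^[j] y}
      = derivSpan D t e ℓ := by
  apply le_antisymm
  · refine span_le.mpr ?_
    rintro _ ⟨j, hj, y, hy, rfl⟩
    exact derivSpan_mono D t e hj (iterate_mem_derivSpan hD ht e hy j)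
  · refine span_le.mpr ?_
    rintro _ ⟨i, j, hj, rfl⟩
    refine span_le.mpr ?_ (pow_smul_iterate_mem_span_iterate hD ht (e i) j)
    rintro _ ⟨m, hm, rfl⟩
    exact subset_span ⟨m, hm.trans hj, e i, subset_span ⟨i, rfl⟩, rfl⟩

end Leibniz

theorem stmt14_general {V : Type*} [AddCommGroup V] [Module (LaurentSeries ℂ) V]
    [Module (PowerSeries ℂ) V] [IsScalarTower (PowerSeries ℂ) (LaurentSeries ℂ) V]
    (z : LaurentSeries ℂ)
    (hzdef : z = HahnSeries.ofPowerSeries ℤ ℂ PowerSeries.X)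
    (θ : LaurentSeries ℂ → LaurentSeries ℂ)
    (hθz : ∀ j : ℤ, θ (z ^ j) = (j : ℤ) • z ^ j)
    (hθO : ∀ f : PowerSeries ℂ, ∃ g : PowerSeries ℂ,
      θ (algebraMap (PowerSeries ℂ) (LaurentSeries ℂ) f)
        = algebraMap (PowerSeries ℂ) (LaurentSeries ℂ) g)
    (D : V → V)
    (hDadd : ∀ v w : V, D (v + w) = D v + D w)
    (hLeib : ∀ (f : LaurentSeries ℂ) (v : V), D (f • v) = θ f • v + f • D v)
    (n : ℕ) (e : Fin n → V) (k ℓ : ℕ) :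
    Submodule.span (PowerSeries ℂ)
        {w : V | ∃ j ≤ ℓ, ∃ y ∈ Submodule.span (PowerSeries ℂ) (Set.range e),
          w = (fun y' => z ^ k • D y')^[j] y}
      = Submodule.span (PowerSeries ℂ)
        {w : V | ∃ i : Fin n, ∃ j ≤ ℓ, w = z ^ (j * k) • D^[j] (e i)} := by
  choose δ hδ using hθO
  let D' : V →+ V := AddMonoidHom.mk' D hDadd
  have hz (m : ℕ) : z ^ m = algebraMap (PowerSeries ℂ) (LaurentSeries ℂ) (PowerSeries.X ^ m) := by
    rw [map_pow, hzdef, LaurentSeries.coe_algebraMap]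
  have hLeibO (a : PowerSeries ℂ) (v : V) : D' (a • v) = δ a • v + a • D' v := by
    simpa only [D', AddMonoidHom.mk'_apply, algebraMap_smul, hδ] using hLeib (algebraMap _ _ a) v
  have hδ_pow (m : ℕ) : (PowerSeries.X ^ k) ^ m ∣ δ ((PowerSeries.X ^ k) ^ m) := by
    refine ⟨((k * m : ℕ) : PowerSeries ℂ), HahnSeries.ofPowerSeries_injective (Γ := ℤ) ?_⟩
    rw [← LaurentSeries.coe_algebraMap, ← hδ, map_mul, ← pow_mul, ← hz, ← zpow_natCast, hθz,
      zpow_natCast, map_natCast, zsmul_eq_mul, mul_comm]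
    push_cast
    ring
  have hT : (fun y' => z ^ k • D y') = fun y' => (PowerSeries.X ^ k : PowerSeries ℂ) • D' y' :=
    funext fun y => by rw [hz, algebraMap_smul]; rfl
  have hpow (j : ℕ) (x : V) :
      z ^ (j * k) • x = (PowerSeries.X ^ k : PowerSeries ℂ) ^ j • x := by
    rw [hz, algebraMap_smul, ← pow_mul, mul_comm]
  simp only [hT, hpow]
  exact Leibniz.span_iterate_eq_derivSpan hLeibO hδ_pow e ℓ

/-- with `K = ℂ((z))`, `𝒪 = ℂ[[z]]`, a connection operator `D = ∇_{z d/dz}`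
on a `K`-vector space `V` (so `D(f•v) = θ(f)•v + f•D(v)` where `θ = z d/dz` is a derivation
of `K` preserving `𝒪` and satisfying `θ(z^j) = j z^j`), a lattice `Λ = Σ 𝒪 e_i`, and
`∇_k = z^k D`, the `𝒪`-module `F^ℓ_k(Λ) = Λ + ∇_kΛ + ⋯ + ∇_k^ℓΛ` equals the `𝒪`-module
generated by `{ z^{jk} D^j e_i : 1 ≤ i ≤ n, 0 ≤ j ≤ ℓ }`. -/
theorem stmt14 {V : Type*} [AddCommGroup V] [Module (LaurentSeries ℂ) V]
    [Module (PowerSeries ℂ) V] [IsScalarTower (PowerSeries ℂ) (LaurentSeries ℂ) V]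
    (z : LaurentSeries ℂ)
    (hzdef : z = HahnSeries.ofPowerSeries ℤ ℂ PowerSeries.X)
    (θ : LaurentSeries ℂ → LaurentSeries ℂ)
    (hθadd : ∀ f g, θ (f + g) = θ f + θ g)
    (hθmul : ∀ f g, θ (f * g) = θ f * g + f * θ g)
    (hθz : ∀ j : ℤ, θ (z ^ j) = (j : ℤ) • z ^ j)
    (hθO : ∀ f : PowerSeries ℂ, ∃ g : PowerSeries ℂ,
      θ (algebraMap (PowerSeries ℂ) (LaurentSeries ℂ) f)
        = algebraMap (PowerSeries ℂ) (LaurentSeries ℂ) g)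
    (D : V → V)
    (hDadd : ∀ v w : V, D (v + w) = D v + D w)
    (hLeib : ∀ (f : LaurentSeries ℂ) (v : V), D (f • v) = θ f • v + f • D v)
    (n : ℕ) (e : Fin n → V) (k ℓ : ℕ) :
    Submodule.span (PowerSeries ℂ)
        {w : V | ∃ j ≤ ℓ, ∃ y ∈ Submodule.span (PowerSeries ℂ) (Set.range e),
          w = (fun y' => z ^ k • D y')^[j] y}
      = Submodule.span (PowerSeries ℂ)
        {w : V | ∃ i : Fin n, ∃ j ≤ ℓ, w = z ^ (j * k) • D^[j] (e i)} :=
  stmt14_general z hzdef θ hθz hθO D hDadd hLeib n e k ℓ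
end
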